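/- Let H be a one-dimensional k-local Hamiltonian with unit-norm terms on the n-site chain, let O be an operator supported on an adjacent interval of at most k sites, and let m ≥ 2 be an integer. Then ‖ad_H^m(O)‖ ≤ ‖O‖ · (6·k·m / ((8/5)·log m))^m. (This is inequality (16) of the paper with the constant γ ≃ 1.6026 replaced by the smaller value 8/5.) -/

import Mathlib

/-!
Write `H = ∑ⱼ hⱼ`, so that `ad_H^{i+1} O = ∑ⱼ ad_H^i (ad_{hⱼ} O)`. Terms with `hⱼ` disjoint from the
interval carrying `O` vanish. If that interval has at most `k s` sites, at most `k s` of the other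
terms lie inside it and keep it, while at most `2 k` stick out and lengthen it by fewer than `k`
sites. By induction `‖ad_H^m O‖ ≤ ‖O‖ (2k)^m W(m, 1)`, where
`W(i, s) = ∑_{r+j=i} C(i,r) 2^r (s+r)^j` (`chainWeight`) satisfies
`s W(i,s) + 2 W(i,s+1) ≤ W(i+1,s)`. The exponential generating function of `W(·, s)` is
`exp (s x + 2 x eˣ)`; evaluating it at `x = log √m` and using Stirling's bound
`m! ≤ e √m (m/e)^m` gives `W(m, 1) ≤ (15 m / (8 log m))^m` for `m ≥ 36`, and the cases `m < 36`
are a finite computation.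
-/

open scoped Matrix.Norms.L2Operator

/-- Operators on the `n`-site chain with local dimension `d`: matrices indexed by
configurations `Fin n → Fin d`, acting on `(ℂ^d)^{⊗n}`, with the ℓ²→ℓ² operator norm. -/
abbrev ChainOp (n d : ℕ) := Matrix (Fin n → Fin d) (Fin n → Fin d) ℂ

/-- `M` is supported on the set of sites `L`: entries vanish whenever the two configurations
differ at a site outside `L`, and entries depend only on the restrictions of the
configurations to `L`. -/
def SupportedOn {n d : ℕ} (M : ChainOp n d) (L : Finset (Fin n)) : Prop :=
  (∀ x y : Fin n → Fin d, (∃ i ∉ L, x i ≠ y i) → M x y = 0) ∧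
  (∀ x y x' y' : Fin n → Fin d,
      (∀ i ∈ L, x i = x' i) → (∀ i ∈ L, y i = y' i) →
      (∀ i ∉ L, x i = y i) → (∀ i ∉ L, x' i = y' i) → M x y = M x' y')

/-- The interval of sites `{i : a ≤ i ≤ b}` (automatically intersected with `{0,…,n-1}`). -/
def chainInterval (n : ℕ) (a b : ℕ) : Finset (Fin n) :=
  Finset.univ.filter fun i : Fin n => a ≤ (i : ℕ) ∧ (i : ℕ) ≤ b

/-- `H` is a one-dimensional `k`-local Hamiltonian with unit-norm terms:
`H = Σ_j h_j` where `h_j` is supported on `{j, …, j+k-1} ∩ {0,…,n-1}` and `‖h_j‖ ≤ 1`. -/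
def IsLocalHam (n d k : ℕ) (H : ChainOp n d) : Prop :=
  ∃ h : Fin n → ChainOp n d,
    H = ∑ j, h j ∧
    ∀ j : Fin n, SupportedOn (h j) (chainInterval n j ((j : ℕ) + k - 1)) ∧ ‖h j‖ ≤ 1

/-- The adjoint action `ad_H(O) := H·O − O·H`. -/
noncomputable def ad {n d : ℕ} (H O : ChainOp n d) : ChainOp n d := H * O - O * H

open Finset Real
open scoped Nat

section Locality

variable {n d : ℕ}

namespace SupportedOn

theorem apply_eq_zero {M : ChainOp n d} {L : Finset (Fin n)} (hM : SupportedOn M L)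
    {x y : Fin n → Fin d} {i : Fin n} (hi : i ∉ L) (hxy : x i ≠ y i) : M x y = 0 :=
  hM.1 x y ⟨i, hi, hxy⟩

theorem apply_piCongrRight {M : ChainOp n d} {L : Finset (Fin n)} (hM : SupportedOn M L)
    {σ : Fin n → Equiv.Perm (Fin d)} (hσ : ∀ i ∈ L, σ i = 1) (x y : Fin n → Fin d) :
    M (Equiv.piCongrRight σ x) (Equiv.piCongrRight σ y) = M x y := by
  by_cases hxy : ∀ i ∉ L, x i = y i
  · refine (hM.2 x y _ _ (fun i hi => ?_) (fun i hi => ?_) hxy (fun i hi => ?_)).symm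
    · simp [hσ i hi]
    · simp [hσ i hi]
    · simp [hxy i hi]
  · push Not at hxy
    obtain ⟨i, hi, hne⟩ := hxy
    rw [hM.apply_eq_zero hi hne, hM.apply_eq_zero hi (by simpa using hne)]

end SupportedOn

theorem supportedOn_iff {M : ChainOp n d} {L : Finset (Fin n)} :
    SupportedOn M L ↔ (∀ x y : Fin n → Fin d, (∃ i ∉ L, x i ≠ y i) → M x y = 0) ∧
      ∀ σ : Fin n → Equiv.Perm (Fin d), (∀ i ∈ L, σ i = 1) → ∀ x y,
        M (Equiv.piCongrRight σ x) (Equiv.piCongrRight σ y) = M x y := by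
  refine ⟨fun hM => ⟨hM.1, fun σ hσ => hM.apply_piCongrRight hσ⟩, fun ⟨h0, hinv⟩ => ⟨h0, ?_⟩⟩
  intro x y x' y' hx hy hxy hxy'
  classical
  let σ : Fin n → Equiv.Perm (Fin d) := fun i => if i ∈ L then 1 else Equiv.swap (x i) (x' i)
  have hσx : Equiv.piCongrRight σ x = x' := by
    ext i
    by_cases hi : i ∈ L <;> simp [σ, hi, hx]
  have hσy : Equiv.piCongrRight σ y = y' := by
    ext i
    by_cases hi : i ∈ L <;> simp [σ, hi, hy, ← hxy i, hxy']
  rw [← hinv σ (fun i hi => if_pos hi) x y, hσx, hσy]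

namespace SupportedOn

variable {A B : ChainOp n d} {La Lb : Finset (Fin n)}

theorem mono (hA : SupportedOn A La) (h : La ⊆ Lb) : SupportedOn A Lb :=
  supportedOn_iff.2 ⟨fun _ _ ⟨i, hi, hne⟩ => hA.1 _ _ ⟨i, fun hi' => hi (h hi'), hne⟩,
    fun _ hσ => hA.apply_piCongrRight fun i hi => hσ i (h hi)⟩

theorem sub (hA : SupportedOn A La) (hB : SupportedOn B La) : SupportedOn (A - B) La :=
  supportedOn_iff.2 ⟨fun x y hxy => by simp [hA.1 x y hxy, hB.1 x y hxy],
    fun _ hσ x y => by simp [hA.apply_piCongrRight hσ, hB.apply_piCongrRight hσ]⟩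

theorem mul (hA : SupportedOn A La) (hB : SupportedOn B Lb) : SupportedOn (A * B) (La ∪ Lb) := by
  refine supportedOn_iff.2 ⟨fun x y ⟨i, hi, hxy⟩ => ?_, fun σ hσ x y => ?_⟩
  · rw [mem_union, not_or] at hi
    rw [Matrix.mul_apply]
    refine sum_eq_zero fun z _ => ?_
    by_cases hz : x i = z i
    · rw [hB.apply_eq_zero hi.2 (hz ▸ hxy), mul_zero]
    · rw [hA.apply_eq_zero hi.1 hz, zero_mul]
  · simp only [Matrix.mul_apply]
    rw [← Equiv.sum_comp (Equiv.piCongrRight σ)]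
    refine sum_congr rfl fun z _ => ?_
    rw [hA.apply_piCongrRight (fun i hi => hσ i (mem_union_left _ hi)),
      hB.apply_piCongrRight (fun i hi => hσ i (mem_union_right _ hi))]

/-- For configurations agreeing off `La ∪ Lb`, the only intermediate configuration contributing to
`(A * B) x y` is `y` on `La` and `x` elsewhere, and symmetrically for `(B * A) x y`. -/
theorem commute (hA : SupportedOn A La) (hB : SupportedOn B Lb) (hdis : Disjoint La Lb) :
    Commute A B := by
  classical
  ext x y
  by_cases hxy : ∃ i ∉ La ∪ Lb, x i ≠ y i
  · rw [(hA.mul hB).1 x y hxy, (hB.mul hA).1 x y (by simpa [union_comm] using hxy)]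
  push Not at hxy
  have hoff : ∀ i ∉ La, i ∉ Lb → x i = y i := fun i hiA hiB => hxy i (by simp [hiA, hiB])
  have hAB : (A * B) x y = A x (La.piecewise y x) * B (La.piecewise y x) y := by
    rw [Matrix.mul_apply]
    refine sum_eq_single _ (fun z _ hz => ?_) (by simp)
    obtain ⟨i, hi⟩ := Function.ne_iff.1 hz
    by_cases hiA : i ∈ La
    · rw [hB.apply_eq_zero (disjoint_left.1 hdis hiA) (by simpa [hiA] using hi), mul_zero]
    · rw [hA.apply_eq_zero hiA (by simpa [hiA, eq_comm] using hi), zero_mul]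
  have hBA : (B * A) x y = B x (Lb.piecewise y x) * A (Lb.piecewise y x) y := by
    rw [Matrix.mul_apply]
    refine sum_eq_single _ (fun z _ hz => ?_) (by simp)
    obtain ⟨i, hi⟩ := Function.ne_iff.1 hz
    by_cases hiB : i ∈ Lb
    · rw [hA.apply_eq_zero (disjoint_right.1 hdis hiB) (by simpa [hiB] using hi), mul_zero]
    · rw [hB.apply_eq_zero hiB (by simpa [hiB, eq_comm] using hi), zero_mul]
  rw [hAB, hBA, mul_comm (B x _)]
  congr 1
  · refine hA.2 _ _ _ _ (fun i hi => ?_) (fun i hi => ?_) (fun i hi => ?_) (fun i hi => ?_)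
    · simp [disjoint_left.1 hdis hi]
    · simp [hi]
    · simp [hi]
    · by_cases hiB : i ∈ Lb <;> simp [hiB, hoff i hi]
  · refine hB.2 _ _ _ _ (fun i hi => ?_) (fun i hi => ?_) (fun i hi => ?_) (fun i hi => ?_)
    · simp [disjoint_right.1 hdis hi]
    · simp [hi]
    · by_cases hiA : i ∈ La
      · simp [hiA]
      · simp [hiA, hoff i hiA hi]
    · simp [hi]

end SupportedOn

@[simp]
theorem mem_chainInterval {a b : ℕ} {i : Fin n} :
    i ∈ chainInterval n a b ↔ a ≤ i ∧ (i : ℕ) ≤ b := by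
  simp [chainInterval]

theorem chainInterval_subset_chainInterval {a b a' b' : ℕ} (ha : a' ≤ a) (hb : b ≤ b') :
    chainInterval n a b ⊆ chainInterval n a' b' := fun i hi => by
  simp only [mem_chainInterval] at hi ⊢
  omega

theorem card_le_card_of_forall_val_mem {T : Finset (Fin n)} {S : Finset ℕ}
    (h : ∀ j ∈ T, (j : ℕ) ∈ S) : T.card ≤ S.card :=
  card_le_card_of_injOn Fin.val h Fin.val_injective.injOn

theorem ad_sum_left {ι : Type*} (s : Finset ι) (f : ι → ChainOp n d) (O : ChainOp n d) :
    ad (∑ j ∈ s, f j) O = ∑ j ∈ s, ad (f j) O := by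
  simp only [ad, sum_mul, mul_sum, sum_sub_distrib]

theorem ad_iterate_sum (H : ChainOp n d) (i : ℕ) {ι : Type*} (s : Finset ι)
    (f : ι → ChainOp n d) : (ad H)^[i] (∑ j ∈ s, f j) = ∑ j ∈ s, (ad H)^[i] (f j) := by
  induction i generalizing f with
  | zero => rfl
  | succ i ih =>
    simp only [Function.iterate_succ_apply, ad, mul_sum, sum_mul, ← sum_sub_distrib, ih]

theorem norm_ad_le (A B : ChainOp n d) : ‖ad A B‖ ≤ 2 * ‖A‖ * ‖B‖ := calc
  ‖A * B - B * A‖ ≤ ‖A‖ * ‖B‖ + ‖B‖ * ‖A‖ :=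
    (norm_sub_le _ _).trans (add_le_add (norm_mul_le _ _) (norm_mul_le _ _))
  _ = 2 * ‖A‖ * ‖B‖ := by ring

theorem SupportedOn.ad {A B : ChainOp n d} {La Lb : Finset (Fin n)} (hA : SupportedOn A La)
    (hB : SupportedOn B Lb) : SupportedOn (ad A B) (La ∪ Lb) :=
  (hA.mul hB).sub (union_comm La Lb ▸ hB.mul hA)

theorem ad_eq_zero_of_disjoint {A B : ChainOp n d} {La Lb : Finset (Fin n)}
    (hA : SupportedOn A La) (hB : SupportedOn B Lb) (hdis : Disjoint La Lb) : ad A B = 0 :=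
  sub_eq_zero.2 (hA.commute hB hdis).eq

end Locality

def chainWeight (i s : ℕ) : ℕ :=
  ∑ p ∈ antidiagonal i, i.choose p.1 * (2 ^ p.1 * (s + p.1) ^ p.2)

@[simp]
theorem chainWeight_zero (s : ℕ) : chainWeight 0 s = 1 := by
  simp [chainWeight]

theorem chainWeight_succ_ge (i s : ℕ) :
    s * chainWeight i s + 2 * chainWeight i (s + 1) ≤ chainWeight (i + 1) s := by
  have pascal := sum_antidiagonal_choose_succ_mul (R := ℕ) (fun r j => 2 ^ r * (s + r) ^ j) i
  simp only [Nat.cast_id] at pascal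
  unfold chainWeight
  rw [pascal, mul_sum, mul_sum]
  refine add_le_add (sum_le_sum fun p _ => ?_) (sum_congr rfl fun p hp => ?_).le
  · rw [pow_succ]
    nlinarith [Nat.zero_le (i.choose p.1 * (2 ^ p.1 * (s + p.1) ^ p.2))]
  · rw [← Nat.choose_symm_of_eq_add (mem_antidiagonal.1 hp).symm]
    ring

theorem chainWeight_le_exp (i s : ℕ) {t : ℝ} (ht : 0 < t) :
    (chainWeight i s : ℝ) ≤ i ! * exp (t * s + 2 * t * exp t) / t ^ i := by
  have hterm : ∀ p ∈ antidiagonal i, ((i.choose p.1 * (2 ^ p.1 * (s + p.1) ^ p.2) : ℕ) : ℝ) ≤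
      i ! * exp (t * s) / t ^ i * ((2 * t * exp t) ^ p.1 / p.1 !) := by
    rintro ⟨r, j⟩ hp
    obtain rfl : r + j = i := mem_antidiagonal.1 hp
    have hexp : (t * (s + r)) ^ j / j ! ≤ exp (t * s) * exp t ^ r := by
      rw [← exp_nat_mul, ← exp_add]
      convert pow_div_factorial_le_exp (t * (s + r)) (by positivity) j using 2
      ring
    calc (((r + j).choose r * (2 ^ r * (s + r) ^ j) : ℕ) : ℝ)
        = (r + j)! / t ^ (r + j) * ((2 * t) ^ r / r !) * ((t * (s + r)) ^ j / j !) := by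
          push_cast
          rw [Nat.cast_add_choose, mul_pow, mul_pow]
          field_simp
          ring
      _ ≤ (r + j)! / t ^ (r + j) * ((2 * t) ^ r / r !) * (exp (t * s) * exp t ^ r) := by
          gcongr
      _ = (r + j)! * exp (t * s) / t ^ (r + j) * ((2 * t * exp t) ^ r / r !) := by
          ring
  have hexp_series : ∑ p ∈ antidiagonal i, (2 * t * exp t) ^ p.1 / (p.1 ! : ℝ) ≤
      exp (2 * t * exp t) := by
    rw [Nat.sum_antidiagonal_eq_sum_range_succ (fun r _ => (2 * t * exp t) ^ r / (r ! : ℝ))]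
    exact sum_le_exp_of_nonneg (by positivity) _
  calc (chainWeight i s : ℝ)
      ≤ ∑ p ∈ antidiagonal i, i ! * exp (t * s) / t ^ i * ((2 * t * exp t) ^ p.1 / p.1 !) := by
        rw [chainWeight, Nat.cast_sum]
        exact sum_le_sum hterm
    _ ≤ i ! * exp (t * s) / t ^ i * exp (2 * t * exp t) := by
        rw [← mul_sum]
        exact mul_le_mul_of_nonneg_left hexp_series (by positivity)
    _ = i ! * exp (t * s + 2 * t * exp t) / t ^ i := by
        rw [exp_add]
        ring

theorem sum_le_mul_of_card_le {ι : Type*} {T : Finset ι} {g : ι → ℝ} {c : ℝ} {N : ℕ}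
    (hg : ∀ j ∈ T, g j ≤ c) (hc : 0 ≤ c) (hT : T.card ≤ N) : ∑ j ∈ T, g j ≤ N * c :=
  (sum_le_card_nsmul T g c hg).trans <| by
    rw [nsmul_eq_mul]
    gcongr

theorem sum_le_of_forall_le_of_card_le {ι : Type*} [Fintype ι] {g : ι → ℝ} {R I : ι → Prop}
    [DecidablePred R] [DecidablePred I] {c₁ c₂ : ℝ} {N₁ N₂ : ℕ} (hR : ∀ j, g j ≠ 0 → R j)
    (h₁ : ∀ j, R j → I j → g j ≤ c₁) (h₂ : ∀ j, R j → g j ≤ c₂) (hc₁ : 0 ≤ c₁) (hc₂ : 0 ≤ c₂)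
    (hN₁ : (univ.filter fun j => R j ∧ I j).card ≤ N₁)
    (hN₂ : (univ.filter fun j => R j ∧ ¬I j).card ≤ N₂) :
    ∑ j, g j ≤ N₁ * c₁ + N₂ * c₂ := by
  rw [← sum_filter_of_ne fun j _ => hR j, ← sum_filter_add_sum_filter_not _ I, filter_filter,
    filter_filter]
  gcongr
  · refine sum_le_mul_of_card_le (fun j hj => ?_) hc₁ hN₁
    simp only [mem_filter, mem_univ, true_and] at hj
    exact h₁ j hj.1 hj.2
  · refine sum_le_mul_of_card_le (fun j hj => ?_) hc₂ hN₂
    simp only [mem_filter, mem_univ, true_and] at hj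
    exact h₂ j hj.1

section Growth

variable {n d k : ℕ} {h : Fin n → ChainOp n d}

theorem card_interior_terms_le (hk : 1 ≤ k) {a b s : ℕ} (hw : b + 1 ≤ a + k * s) :
    (univ.filter fun j : Fin n => ((j : ℕ) ≤ b ∧ a < j + k) ∧ (a ≤ j ∧ j + k ≤ b + 1)).card
      ≤ k * s := by
  refine (card_le_card_of_forall_val_mem (S := Ico a (b + 2 - k)) fun j hj => ?_).trans ?_
  · simp only [mem_filter, mem_univ, true_and] at hj
    simp only [mem_Ico]
    omega
  · simp only [Nat.card_Ico]
    omega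

theorem card_boundary_terms_le {a b : ℕ} :
    (univ.filter fun j : Fin n => ((j : ℕ) ≤ b ∧ a < j + k) ∧ ¬(a ≤ j ∧ j + k ≤ b + 1)).card
      ≤ 2 * k := by
  refine (card_le_card_of_forall_val_mem (S := Ico (a + 1 - k) a ∪ Ico (b + 2 - k) (b + 1))
    fun j hj => ?_).trans ((card_union_le _ _).trans ?_)
  · simp only [mem_filter, mem_univ, true_and] at hj
    simp only [mem_union, mem_Ico]
    omega
  · simp only [Nat.card_Ico]
    omega

theorem norm_ad_iterate_succ_le (hk : 1 ≤ k)
    (hh : ∀ j : Fin n, SupportedOn (h j) (chainInterval n j (j + k - 1)) ∧ ‖h j‖ ≤ 1) (i : ℕ)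
    (ih : ∀ a b s (O : ChainOp n d), b + 1 ≤ a + k * s → SupportedOn O (chainInterval n a b) →
      ‖(ad (∑ j, h j))^[i] O‖ ≤ ‖O‖ * (2 * k) ^ i * chainWeight i s)
    {a b s : ℕ} {O : ChainOp n d} (hw : b + 1 ≤ a + k * s)
    (hO : SupportedOn O (chainInterval n a b)) :
    ‖(ad (∑ j, h j))^[i + 1] O‖ ≤ ‖O‖ * (2 * k) ^ (i + 1) * chainWeight (i + 1) s := by
  classical
  set g : Fin n → ℝ := fun j => ‖(ad (∑ j, h j))^[i] (ad (h j) O)‖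
  have hterm : ∀ (j : Fin n) (a' b' s' : ℕ), b' + 1 ≤ a' + k * s' → a' ≤ a → a' ≤ j → b ≤ b' →
      j + k - 1 ≤ b' → g j ≤ 2 * ‖O‖ * ((2 * k) ^ i * chainWeight i s') := by
    intro j a' b' s' hw' ha hj hb hjb
    have hsupp := ((hh j).1.ad hO).mono (union_subset
      (chainInterval_subset_chainInterval hj hjb) (chainInterval_subset_chainInterval ha hb))
    calc g j ≤ ‖ad (h j) O‖ * (2 * k) ^ i * chainWeight i s' := ih a' b' s' _ hw' hsupp
      _ ≤ 2 * ‖h j‖ * ‖O‖ * (2 * k) ^ i * chainWeight i s' := by gcongr; exact norm_ad_le _ _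
      _ ≤ 2 * 1 * ‖O‖ * (2 * k) ^ i * chainWeight i s' := by gcongr; exact (hh j).2
      _ = 2 * ‖O‖ * ((2 * k) ^ i * chainWeight i s') := by ring
  have hzero : ∀ j, g j ≠ 0 → (j : ℕ) ≤ b ∧ a < j + k := by
    intro j hj
    by_contra hfar
    have hdis : Disjoint (chainInterval n j (j + k - 1)) (chainInterval n a b) :=
      disjoint_left.2 fun i hi hi' => by simp only [mem_chainInterval] at hi hi'; omega
    simp [g, ad_eq_zero_of_disjoint (hh j).1 hO hdis,
      Function.iterate_fixed (show ad (∑ j, h j) 0 = 0 by simp [ad])] at hj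
  calc ‖(ad (∑ j, h j))^[i + 1] O‖
      ≤ ∑ j, g j := by
        rw [Function.iterate_succ_apply, ad_sum_left, ad_iterate_sum]
        exact norm_sum_le _ _
    _ ≤ (k * s : ℕ) * (2 * ‖O‖ * ((2 * k) ^ i * chainWeight i s)) +
          (2 * k : ℕ) * (2 * ‖O‖ * ((2 * k) ^ i * chainWeight i (s + 1))) :=
        sum_le_of_forall_le_of_card_le hzero
          (fun j _ hj => hterm j a b s hw le_rfl hj.1 le_rfl (by omega))
          (fun j hj => hterm j (min a j) (max b (j + k - 1)) (s + 1) (by rw [mul_add]; omega)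
            (min_le_left _ _) (min_le_right _ _) (le_max_left _ _) (le_max_right _ _))
          (by positivity) (by positivity) (card_interior_terms_le hk hw) card_boundary_terms_le
    _ = ‖O‖ * (2 * k) ^ (i + 1) * (s * chainWeight i s + 2 * chainWeight i (s + 1) : ℕ) := by
        push_cast
        ring
    _ ≤ ‖O‖ * (2 * k) ^ (i + 1) * chainWeight (i + 1) s := by
        gcongr
        exact chainWeight_succ_ge i s

theorem norm_ad_iterate_le (hk : 1 ≤ k) {H : ChainOp n d} (hH : IsLocalHam n d k H) (i : ℕ)
    {a b s : ℕ} {O : ChainOp n d} (hw : b + 1 ≤ a + k * s)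
    (hO : SupportedOn O (chainInterval n a b)) :
    ‖(ad H)^[i] O‖ ≤ ‖O‖ * (2 * k) ^ i * chainWeight i s := by
  obtain ⟨h, rfl, hh⟩ := hH
  induction i generalizing a b s O with
  | zero => simp
  | succ i ih => exact norm_ad_iterate_succ_le hk hh i (fun _ _ _ _ => ih) hw hO

end Growth

theorem factorial_le_exp_one_mul_sqrt_mul_pow {m : ℕ} (hm : m ≠ 0) :
    (m ! : ℝ) ≤ exp 1 * √m * (m / exp 1) ^ m := by
  obtain ⟨k, rfl⟩ := Nat.exists_eq_add_one_of_ne_zero hm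
  have h : Stirling.stirlingSeq (k + 1) ≤ Stirling.stirlingSeq 1 :=
    Stirling.stirlingSeq'_antitone (Nat.zero_le k)
  rw [Stirling.stirlingSeq_one, Stirling.stirlingSeq,
    div_le_div_iff₀ (by positivity) (by positivity), Real.sqrt_mul zero_le_two] at h
  have h2 : (0 : ℝ) < √2 := by positivity
  nlinarith [h]

theorem log_le_div_exp_one {x : ℝ} (hx : 0 < x) : log x ≤ x / exp 1 := by
  have := log_le_sub_one_of_pos (div_pos hx (exp_pos 1))
  rw [log_div hx.ne' (exp_pos 1).ne', log_exp] at this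
  linarith

theorem exp_fourteen_fifteenths_le : exp (14 / 15) ≤ 15 / 16 * exp 1 := by
  have h := add_one_le_exp (1 / 15)
  rw [show (1 : ℝ) = 14 / 15 + 1 / 15 by norm_num, exp_add]
  nlinarith [exp_pos (14 / 15)]

theorem one_add_two_mul_log_add_le {s : ℝ} (hs : 6 ≤ s) :
    1 + 2 * log s + 2 * s * log s ≤ 14 / 15 * s ^ 2 := by
  have hlog : log s ≤ 10 / 27 * s := by
    refine (log_le_div_exp_one (by linarith)).trans ?_
    rw [div_le_iff₀ (exp_pos 1)]
    nlinarith [exp_one_gt_d9]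
  nlinarith [mul_le_mul_of_nonneg_left hlog (by linarith : (0 : ℝ) ≤ 2 + 2 * s),
    mul_nonneg (sub_nonneg.2 hs) (by linarith : (0 : ℝ) ≤ s)]

theorem factorial_mul_exp_le {m : ℕ} {s : ℝ} (hs : 6 ≤ s) (hsm : s ^ 2 = m) :
    (m ! : ℝ) * exp (log s + 2 * log s * s) ≤ (15 / 16 * m) ^ m := calc
  (m ! : ℝ) * exp (log s + 2 * log s * s)
      ≤ exp 1 * s * (m / exp 1) ^ m * exp (log s + 2 * log s * s) := by
        rw [← Real.sqrt_sq (by linarith : 0 ≤ s), hsm]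
        gcongr
        exact factorial_le_exp_one_mul_sqrt_mul_pow (by rintro rfl; simp at hsm; linarith)
    _ = (m / exp 1) ^ m * exp (1 + log s + (log s + 2 * log s * s)) := by
        simp only [exp_add, exp_log (by linarith : 0 < s)]
        ring
    _ ≤ (m / exp 1) ^ m * exp (14 / 15) ^ m := by
        rw [← exp_nat_mul, ← hsm]
        gcongr
        linarith [one_add_two_mul_log_add_le hs]
    _ ≤ (m / exp 1) ^ m * (15 / 16 * exp 1) ^ m := by
        gcongr
        exact exp_fourteen_fifteenths_le
    _ = (15 / 16 * m) ^ m := by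
        rw [← mul_pow]
        field_simp

theorem chainWeight_one_le_of_le {m : ℕ} (hm : 36 ≤ m) :
    (chainWeight m 1 : ℝ) ≤ (15 / 8 * m / log m) ^ m := by
  set s := √(m : ℝ)
  have hs : 6 ≤ s := Real.le_sqrt_of_sq_le (by norm_num; exact_mod_cast hm)
  have hsm : s ^ 2 = m := Real.sq_sqrt (Nat.cast_nonneg m)
  have hlog_pos : 0 < log s := log_pos (by linarith)
  calc (chainWeight m 1 : ℝ)
      ≤ m ! * exp (log s * (1 : ℕ) + 2 * log s * exp (log s)) / log s ^ m :=
        chainWeight_le_exp m 1 hlog_pos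
    _ ≤ (15 / 16 * m) ^ m / log s ^ m := by
        rw [exp_log (by linarith), Nat.cast_one, mul_one]
        gcongr
        exact factorial_mul_exp_le hs hsm
    _ = (15 / 8 * m / log m) ^ m := by
        rw [← hsm, log_pow, ← div_pow]
        congr 1
        field_simp
        ring

theorem log_lt_log2_pow_add_one_div {m k : ℕ} (hm : m ≠ 0) (hk : k ≠ 0) :
    log m < (Nat.log2 (m ^ k) + 1 : ℕ) / k * log 2 := by
  have h : ((m ^ k : ℕ) : ℝ) < ((2 ^ (Nat.log2 (m ^ k) + 1) : ℕ) : ℝ) :=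
    Nat.cast_lt.2 Nat.lt_log2_self
  push_cast at h
  have := log_lt_log (by positivity) h
  rw [log_pow, log_pow] at this
  rw [div_mul_eq_mul_div, lt_div_iff₀ (by positivity)]
  push_cast at this ⊢
  linarith

/-- The case `m < 36` of `chainWeight_one_le`, after bounding `log m` by
`log_lt_log2_pow_add_one_div` with `k = 4` and `log 2 < 7 / 10`. -/
theorem chainWeight_one_mul_le_of_lt_36 :
    ∀ m < 36, 2 ≤ m → chainWeight m 1 * (56 * (Nat.log2 (m ^ 4) + 1)) ^ m ≤ (600 * m) ^ m := by
  decide +kernel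

theorem chainWeight_one_le_of_lt {m : ℕ} (h2 : 2 ≤ m) (h36 : m < 36) :
    (chainWeight m 1 : ℝ) ≤ (15 / 8 * m / log m) ^ m := by
  set p := Nat.log2 (m ^ 4) + 1
  have hcheck : (chainWeight m 1 : ℝ) * (56 * p) ^ m ≤ (600 * m) ^ m := by
    exact_mod_cast chainWeight_one_mul_le_of_lt_36 m h36 h2
  have hlog_pos : 0 < log m := log_pos (by exact_mod_cast h2)
  have hlog : log m ≤ 7 * p / 40 := by
    have := log_lt_log2_pow_add_one_div (m := m) (k := 4) (by omega) (by norm_num)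
    nlinarith [log_two_lt_d9, (by positivity : (0 : ℝ) ≤ p)]
  calc (chainWeight m 1 : ℝ)
      ≤ (600 * m / (56 * p)) ^ m := by
        rw [div_pow, le_div_iff₀ (by positivity)]
        exact hcheck
    _ ≤ (15 / 8 * m / log m) ^ m := by
        refine pow_le_pow_left₀ (by positivity) ?_ m
        rw [div_le_div_iff₀ (by positivity) hlog_pos]
        nlinarith [(by positivity : (0 : ℝ) ≤ m)]

theorem chainWeight_one_le {m : ℕ} (hm : 2 ≤ m) :
    (chainWeight m 1 : ℝ) ≤ (15 / 8 * m / log m) ^ m := by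
  rcases lt_or_ge m 36 with h | h
  · exact chainWeight_one_le_of_lt hm h
  · exact chainWeight_one_le_of_le h

theorem card_chainInterval (n a b : ℕ) : (chainInterval n a b).card = min (b + 1) n - a := by
  rw [← card_map Fin.valEmbedding, ← Nat.card_Ico]
  congr 1
  ext x
  simp only [mem_map, mem_chainInterval, Fin.valEmbedding_apply, mem_Ico]
  refine ⟨fun ⟨i, hi, hix⟩ => ?_, fun hx => ⟨⟨x, by omega⟩, by simp only; omega, rfl⟩⟩
  have := i.isLt
  omega

theorem multi_commutator_norm_bound_log_general
    (n d k : ℕ) (hk : 2 ≤ k)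
    (H : ChainOp n d) (hH : IsLocalHam n d k H)
    (a b : ℕ) (O : ChainOp n d)
    (hO : SupportedOn O (chainInterval n a b))
    (hcard : (chainInterval n a b).card ≤ k)
    (m : ℕ) (hm : 2 ≤ m) :
    ‖(ad H)^[m] O‖ ≤
      ‖O‖ * (6 * (k : ℝ) * (m : ℝ) / ((8 / 5) * Real.log (m : ℝ))) ^ m := by
  have hI : chainInterval n a b = chainInterval n a (min (b + 1) n - 1) := by
    ext i
    have := i.isLt
    simp only [mem_chainInterval]
    omega
  have hw : min (b + 1) n - 1 + 1 ≤ a + k * 1 := by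
    rw [card_chainInterval] at hcard
    omega
  have hlog : 0 < log m := log_pos (by exact_mod_cast hm)
  calc ‖(ad H)^[m] O‖ ≤ ‖O‖ * (2 * k) ^ m * chainWeight m 1 :=
        norm_ad_iterate_le (by omega) hH m hw (hI ▸ hO)
    _ ≤ ‖O‖ * (2 * k) ^ m * (15 / 8 * m / log m) ^ m := by
        gcongr
        exact chainWeight_one_le hm
    _ = ‖O‖ * (6 * k * m / (8 / 5 * log m)) ^ m := by
        rw [mul_assoc, ← mul_pow]
        congr 2
        field_simp
        ring

/-- Inequality (16) of the paper (with `γ ≃ 1.6026` replaced by the smaller value `8/5`):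
for a one-dimensional `k`-local Hamiltonian `H` with unit-norm terms and an operator `O`
supported on an interval of at most `k` sites,
`‖ad_H^m(O)‖ ≤ ‖O‖ · (6·k·m/((8/5)·log m))^m` for every integer `m ≥ 2`. -/
theorem multi_commutator_norm_bound_log
    (n d k : ℕ) (hn : 1 ≤ n) (hd : 2 ≤ d) (hk : 2 ≤ k)
    (H : ChainOp n d) (hH : IsLocalHam n d k H)
    (a b : ℕ) (O : ChainOp n d)
    (hO : SupportedOn O (chainInterval n a b))
    (hcard : (chainInterval n a b).card ≤ k)
    (m : ℕ) (hm : 2 ≤ m) :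
    ‖(ad H)^[m] O‖ ≤
      ‖O‖ * (6 * (k : ℝ) * (m : ℝ) / ((8 / 5) * Real.log (m : ℝ))) ^ m :=
  multi_commutator_norm_bound_log_general n d k hk H hH a b O hO hcard m hm
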